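/- Let (Q, F) be monopolist-optimal. Then there exists an allocation Q̃ with Q̃ = Q F-almost surely such that (Q̃, F) is also monopolist-optimal, Q̃₊(θ) = Q̃(θ) whenever κ'(Q̃₊(θ)) < θ, and Q̃₋(θ) = Q̃(θ) whenever κ'(Q̃₋(θ)) > θ, where Q̃₊(θ) = inf_{θ' > θ} Q̃(θ') and Q̃₋(θ) = sup_{θ' < θ} Q̃(θ') denote the one-sided limits of the nondecreasing function Q̃. -/

import Mathlib

open MeasureTheory Set Filter

/-- A cumulative distribution function on `[θL, θH]`. -/
structure CDF (θL θH : ℝ) where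
  toFun : ℝ → ℝ
  mono : Monotone toFun
  right_continuous : ∀ x, ContinuousWithinAt toFun (Set.Ici x) x
  eq_zero : ∀ x, x < θL → toFun x = 0
  eq_one : ∀ x, θH ≤ x → toFun x = 1

namespace CDF

variable {θL θH : ℝ}

/-- The Stieltjes function associated with a CDF. -/
noncomputable def stieltjes (F : CDF θL θH) : StieltjesFunction ℝ :=
  ⟨F.toFun, F.mono, F.right_continuous⟩

/-- The Lebesgue–Stieltjes measure of a CDF. -/
noncomputable def meas (F : CDF θL θH) : Measure ℝ := F.stieltjes.measure

/-- The integral `∫ φ dF`. -/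
noncomputable def integ (F : CDF θL θH) (φ : ℝ → ℝ) : ℝ := ∫ θ, φ θ ∂F.meas

/-- The support of the distribution with CDF `F`. -/
def supp (F : CDF θL θH) : Set ℝ :=
  {x | ∀ ε > 0, 0 < F.toFun (x + ε) - F.toFun (x - ε)}

/-- The left limit `F₋`. -/
noncomputable def leftLim (F : CDF θL θH) (x : ℝ) : ℝ := Function.leftLim F.toFun x

/-- The mean `∫ θ dF(θ)`. -/
noncomputable def mean (F : CDF θL θH) : ℝ := F.integ (fun θ => θ)

end CDF

/-- `I_F(θ) = ∫_{θL}^{θ} (F₀(t) − F(t)) dt`. -/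
noncomputable def IFun {θL θH : ℝ} (F₀ F : CDF θL θH) (θ : ℝ) : ℝ :=
  ∫ t in θL..θ, (F₀.toFun t - F.toFun t)

/-- `F ∈ 𝓘`: `F` is a feasible signal given the prior `F₀`. -/
def IsSignal {θL θH : ℝ} (F₀ F : CDF θL θH) : Prop :=
  (∀ θ ∈ Set.Icc θL θH, 0 ≤ IFun F₀ F θ) ∧ IFun F₀ F θH = 0

/-- The prior's support contains both endpoints. -/
def IsPrior {θL θH : ℝ} (F₀ : CDF θL θH) : Prop :=
  θL ∈ F₀.supp ∧ θH ∈ F₀.supp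

/-- Assumptions on the information-cost function `c` (with derivatives `c'`, `c''`). -/
structure CostAssumptions (θL θH θ₀ : ℝ) (c c' c'' : ℝ → ℝ) : Prop where
  cont : ContinuousOn c (Set.Icc θL θH)
  nonneg : ∀ θ ∈ Set.Icc θL θH, 0 ≤ c θ
  hasDeriv : ∀ θ ∈ Set.Ioo θL θH, HasDerivAt c (c' θ) θ
  hasDeriv2 : ∀ θ ∈ Set.Ioo θL θH, HasDerivAt c' (c'' θ) θ
  cont2 : ContinuousOn c'' (Set.Ioo θL θH)
  pos2 : ∀ θ ∈ Set.Ioo θL θH, 0 < c'' θ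
  minAt : ∀ θ ∈ Set.Icc θL θH, c θ₀ ≤ c θ
  slopeBot : Filter.Tendsto c' (nhdsWithin θL (Set.Ioi θL)) Filter.atBot
  slopeTop : Filter.Tendsto c' (nhdsWithin θH (Set.Iio θH)) Filter.atTop

/-- Assumptions on the production-cost function `κ` (with derivative `κ'`). -/
structure KappaAssumptions (θL θH qbar : ℝ) (κ κ' : ℝ → ℝ) : Prop where
  hasDeriv : ∀ q ∈ Set.Icc (0:ℝ) qbar, HasDerivWithinAt κ (κ' q) (Set.Icc 0 qbar) q
  contDeriv : ContinuousOn κ' (Set.Icc 0 qbar)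
  strictMono : StrictMonoOn κ (Set.Icc 0 qbar)
  strictConvex : StrictConvexOn ℝ (Set.Icc 0 qbar) κ
  zero : κ 0 = 0
  nonneg : ∀ q ∈ Set.Icc (0:ℝ) qbar, 0 ≤ κ q
  derivZero : κ' 0 ≤ θL
  derivTop : θH < κ' qbar

/-- An allocation: a nondecreasing map from types into `[0, q̄]`. -/
def IsAllocation (θL θH qbar : ℝ) (Q : ℝ → ℝ) : Prop :=
  MonotoneOn Q (Set.Icc θL θH) ∧ ∀ θ ∈ Set.Icc θL θH, Q θ ∈ Set.Icc 0 qbar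

/-- The buyer's value `V_{Q,ū}(θ) = ū + ∫_{θL}^{θ} Q(t) dt`. -/
noncomputable def Vfun (θL : ℝ) (Q : ℝ → ℝ) (u θ : ℝ) : ℝ :=
  u + ∫ t in θL..θ, Q t

/-- The mechanism `(Q, ū)` is `F`-incentive compatible. -/
def IsIC {θL θH : ℝ} (F₀ : CDF θL θH) (c : ℝ → ℝ) (Q : ℝ → ℝ) (u : ℝ)
    (F : CDF θL θH) : Prop :=
  IsSignal F₀ F ∧
  ∀ F' : CDF θL θH, IsSignal F₀ F' →
    F'.integ (fun θ => Vfun θL Q u θ - c θ) ≤ F.integ (fun θ => Vfun θL Q u θ - c θ)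

/-- The monopolist's per-report profit `π_{Q,ū}(θ)`. -/
noncomputable def profit (θL : ℝ) (κ Q : ℝ → ℝ) (u θ : ℝ) : ℝ :=
  θ * Q θ - Vfun θL Q u θ - κ (Q θ)

/-- `(Q, F)` is monopolist-optimal. -/
def MonopolistOptimal {θL θH : ℝ} (qbar : ℝ) (F₀ : CDF θL θH) (c κ : ℝ → ℝ)
    (Q : ℝ → ℝ) (F : CDF θL θH) : Prop :=
  IsAllocation θL θH qbar Q ∧ IsIC F₀ c Q 0 F ∧
  ∀ (Q' : ℝ → ℝ) (u' : ℝ) (F' : CDF θL θH),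
    IsAllocation θL θH qbar Q' → 0 ≤ u' → IsIC F₀ c Q' u' F' →
    F'.integ (profit θL κ Q' u') ≤ F.integ (profit θL κ Q 0)

/-- `P` is an `F`-shadow price. -/
def IsShadowPrice {θL θH : ℝ} (F₀ F : CDF θL θH) (P : ℝ → ℝ) : Prop :=
  (∃ K : NNReal, LipschitzOnWith K P (Set.Icc θL θH)) ∧
  ConvexOn ℝ (Set.Icc θL θH) P ∧
  ∀ a b : ℝ, Set.Ioo a b ⊆ {θ | θ ∈ Set.Icc θL θH ∧ 0 < IFun F₀ F θ} →
    ∃ m k : ℝ, ∀ θ ∈ Set.Ioo a b, P θ = m * θ + k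

/-- `P` is an `F`-shadow price for `φ`. -/
def IsShadowPriceFor {θL θH : ℝ} (F₀ F : CDF θL θH) (φ P : ℝ → ℝ) : Prop :=
  IsShadowPrice F₀ F P ∧ (∀ θ ∈ Set.Icc θL θH, φ θ ≤ P θ) ∧
  ∀ θ ∈ F.supp, P θ = φ θ

/-- `θL_F`, the minimum of the support of `F`. -/
noncomputable def thetaLF {θL θH : ℝ} (F : CDF θL θH) : ℝ := sInf F.supp

/-- `θH_F`, the maximum of the support of `F`. -/
noncomputable def thetaHF {θL θH : ℝ} (F : CDF θL θH) : ℝ := sSup F.supp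

/-- `p` is an `F`-shadow derivative. -/
def IsShadowDeriv {θL θH : ℝ} (qbar : ℝ) (F₀ : CDF θL θH) (c' : ℝ → ℝ)
    (F : CDF θL θH) (p : ℝ → ℝ) : Prop :=
  (∃ M : ℝ, ∀ θ ∈ Set.Icc θL θH, |p θ| ≤ M) ∧
  MonotoneOn p (Set.Icc θL θH) ∧
  (∀ a b : ℝ, Set.Ioo a b ⊆ {θ | θ ∈ Set.Icc θL θH ∧ 0 < IFun F₀ F θ} →
    ∀ x ∈ Set.Ioo a b, ∀ y ∈ Set.Ioo a b, p x = p y) ∧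
  -c' (thetaLF F) ≤ p (thetaLF F) ∧
  p (thetaHF F) ≤ qbar - c' (thetaHF F)

/-- The allocation `Q^p` induced by a shadow derivative `p`. -/
noncomputable def inducedAlloc {θL θH : ℝ} (qbar : ℝ) (c' : ℝ → ℝ)
    (F : CDF θL θH) (p : ℝ → ℝ) (θ : ℝ) : ℝ :=
  if θ < thetaLF F then max (p (thetaLF F) + c' θ) 0
  else if θ ≤ thetaHF F then p θ + c' θ
  else min (p (thetaHF F) + c' θ) qbar

/-- `Q` is `F`-information-cost-canceling. -/
def IsICC {θL θH : ℝ} (qbar : ℝ) (F₀ : CDF θL θH) (c' : ℝ → ℝ)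
    (F : CDF θL θH) (Q : ℝ → ℝ) : Prop :=
  ∃ p : ℝ → ℝ, IsShadowDeriv qbar F₀ c' F p ∧
    ∀ θ ∈ Set.Icc θL θH, Q θ = inducedAlloc qbar c' F p θ

/-- `φ` satisfies edge irrelevance: some maximizer over CDFs with the prior mean has
support in the open interval. -/
def EdgeIrrelevant {θL θH : ℝ} (F₀ : CDF θL θH) (φ : ℝ → ℝ) : Prop :=
  ∃ F' : CDF θL θH, F'.mean = F₀.mean ∧
    (∀ G : CDF θL θH, G.mean = F₀.mean → G.integ φ ≤ F'.integ φ) ∧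
    F'.supp ⊆ Set.Ioo θL θH

/-- `θH_Q = inf {θ : Q(θ) = Q(θH)}`. -/
noncomputable def thetaHQ (θL θH : ℝ) (Q : ℝ → ℝ) : ℝ :=
  sInf {θ | θ ∈ Set.Icc θL θH ∧ Q θ = Q θH}

/-- `θL_Q = sup {θ : Q(θ) = Q(θL)}`. -/
noncomputable def thetaLQ (θL θH : ℝ) (Q : ℝ → ℝ) : ℝ :=
  sSup {θ | θ ∈ Set.Icc θL θH ∧ Q θ = Q θL}

/-- The support of a (cumulative distribution) function `G : ℝ → ℝ`. -/
def suppOfFun (G : ℝ → ℝ) : Set ℝ := {x | ∀ ε > 0, 0 < G (x + ε) - G (x - ε)}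

/-- The conditional CDF `F(·|θ ∈ [a, b])`. -/
noncomputable def condFun {θL θH : ℝ} (F : CDF θL θH) (a b θ : ℝ) : ℝ :=
  if θ < a then 0
  else (F.toFun (min θ b) - F.leftLim a) / (F.toFun b - F.leftLim a)

/-!
Moving `Q(θ)` at each jump to the one-sided limit favoured by the sign of `θ - κ'` changes `Q`
only on a countable, hence Lebesgue-null, set. So the buyer's value `V_Q`, and with it incentive
compatibility, is unchanged, while by convexity of `κ` the surplus `θ q - κ(q)` strictly increases
wherever `Q` moved. Optimality of `Q` then forces the moves onto an `F`-null set.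
-/

open Topology

lemma Set.countable_of_forall_lt_of_le {s : Set ℝ} {f g : ℝ → ℝ}
    (hlt : ∀ x ∈ s, f x < g x) (hle : ∀ x ∈ s, ∀ y ∈ s, x < y → g x ≤ f y) : s.Countable := by
  refine Set.PairwiseDisjoint.countable_of_isOpen (s := fun x => Ioo (f x) (g x)) ?_
    (fun _ _ => isOpen_Ioo) (fun x hx => nonempty_Ioo.2 (hlt x hx))
  intro x hx y hy hxy
  refine disjoint_left.2 fun z hzx hzy => ?_
  rcases hxy.lt_or_gt with h | h
  · linarith [hle x hx y hy h, hzx.2, hzy.1]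
  · linarith [hle y hy x hx h, hzx.1, hzy.2]

section Convex

variable {S : Set ℝ} {κ : ℝ → ℝ} {q r d θ : ℝ}

lemma ConvexOn.monotoneOn_of_hasDerivWithinAt {κ' : ℝ → ℝ} (hκ : ConvexOn ℝ S κ)
    (hd : ∀ x ∈ S, HasDerivWithinAt κ (κ' x) S x) : MonotoneOn κ' S := by
  intro a ha b hb hab
  rcases hab.eq_or_lt with rfl | h
  · rfl
  exact (hκ.le_slope_of_hasDerivWithinAt ha hb h (hd a ha)).trans
    (hκ.slope_le_of_hasDerivWithinAt ha hb h (hd b hb))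

lemma ConvexOn.surplus_lt_of_deriv_lt (hκ : ConvexOn ℝ S κ) (hq : q ∈ S) (hr : r ∈ S)
    (hqr : q < r) (hd : HasDerivWithinAt κ d S r) (hdθ : d < θ) :
    θ * q - κ q < θ * r - κ r := by
  have hslope := hκ.slope_le_of_hasDerivWithinAt hq hr hqr hd
  rw [slope_def_field, div_le_iff₀ (sub_pos.2 hqr)] at hslope
  nlinarith

lemma ConvexOn.surplus_lt_of_lt_deriv (hκ : ConvexOn ℝ S κ) (hq : q ∈ S) (hr : r ∈ S)
    (hrq : r < q) (hd : HasDerivWithinAt κ d S r) (hθd : θ < d) :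
    θ * q - κ q < θ * r - κ r := by
  have hslope := hκ.le_slope_of_hasDerivWithinAt hr hq hrq hd
  rw [slope_def_field, le_div_iff₀ (sub_pos.2 hrq)] at hslope
  nlinarith

end Convex

namespace CDF

variable {θL θH : ℝ} (F : CDF θL θH)

instance : IsLocallyFiniteMeasure F.meas :=
  inferInstanceAs (IsLocallyFiniteMeasure F.stieltjes.measure)

lemma tendsto_atBot : Tendsto F.stieltjes atBot (𝓝 0) :=
  tendsto_const_nhds.congr' <| (eventually_lt_atBot θL).mono fun x hx => (F.eq_zero x hx).symm

lemma tendsto_atTop : Tendsto F.stieltjes atTop (𝓝 1) :=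
  tendsto_const_nhds.congr' <| (eventually_ge_atTop θH).mono fun x hx => (F.eq_one x hx).symm

lemma meas_Iio : F.meas (Iio θL) = 0 := by
  have hleft : Function.leftLim F.stieltjes θL = 0 :=
    leftLim_eq_of_tendsto <| tendsto_const_nhds.congr' <|
      eventually_nhdsWithin_of_forall fun x hx => (F.eq_zero x hx).symm
  simp [meas, F.stieltjes.measure_Iio F.tendsto_atBot, hleft]

lemma meas_Ioi : F.meas (Ioi θH) = 0 := by
  have hH : F.stieltjes θH = 1 := F.eq_one θH le_rfl
  simp [meas, F.stieltjes.measure_Ioi F.tendsto_atTop, hH]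

lemma ae_mem_Icc : ∀ᵐ θ ∂F.meas, θ ∈ Icc θL θH := by
  refine measure_mono_null (fun θ hθ => ?_) (measure_union_null F.meas_Iio F.meas_Ioi)
  by_contra h
  simp only [mem_union, mem_Iio, mem_Ioi, not_or, not_lt] at h
  exact hθ ⟨h.1, h.2⟩

lemma restrict_Icc : F.meas.restrict (Icc θL θH) = F.meas :=
  Measure.restrict_eq_self_of_ae_mem F.ae_mem_Icc

end CDF

section Mechanism

variable {θL θH qbar : ℝ} {κ Q Q' : ℝ → ℝ}

lemma IsAllocation.monotoneOn_Vfun (hQ : IsAllocation θL θH qbar Q) (u : ℝ) :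
    MonotoneOn (Vfun θL Q u) (Icc θL θH) := by
  intro a ha b hb hab
  have hint : ∀ {x y}, x ∈ Icc θL θH → y ∈ Icc θL θH → IntervalIntegrable Q volume x y :=
    fun hx hy => (hQ.1.mono (uIcc_subset_Icc hx hy)).intervalIntegrable
  have hL : θL ∈ Icc θL θH := ⟨le_rfl, ha.1.trans ha.2⟩
  have hgain : 0 ≤ ∫ t in a..b, Q t :=
    intervalIntegral.integral_nonneg hab fun t ht => (hQ.2 t ⟨ha.1.trans ht.1, ht.2.trans hb.2⟩).1
  have hsplit := intervalIntegral.integral_interval_sub_left (hint hL hb) (hint hL ha)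
  simp only [Vfun]
  linarith

lemma IsAllocation.integrable_profit (hQ : IsAllocation θL θH qbar Q)
    (hκ : MonotoneOn κ (Icc 0 qbar)) (F : CDF θL θH) (u : ℝ) :
    Integrable (profit θL κ Q u) F.meas := by
  rw [← F.restrict_Icc]
  have hQint := hQ.1.integrableOn_isCompact (μ := F.meas) isCompact_Icc
  exact ((hQint.continuousOn_mul continuousOn_id isCompact_Icc).sub
      ((hQ.monotoneOn_Vfun u).integrableOn_isCompact isCompact_Icc)).sub
    ((hκ.comp hQ.1 hQ.2).integrableOn_isCompact isCompact_Icc)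

lemma Vfun_congr_ae (h : Q' =ᵐ[volume] Q) (u θ : ℝ) : Vfun θL Q' u θ = Vfun θL Q u θ := by
  simp only [Vfun, intervalIntegral.integral_congr_ae (h.mono fun _ hx _ => hx)]

lemma isIC_congr_ae {F₀ F : CDF θL θH} {c : ℝ → ℝ} {u : ℝ} (h : Q' =ᵐ[volume] Q) :
    IsIC F₀ c Q' u F ↔ IsIC F₀ c Q u F := by
  simp only [IsIC, Vfun_congr_ae h]

variable {F₀ F : CDF θL θH} {c : ℝ → ℝ}

lemma MonopolistOptimal.congr_ae (hopt : MonopolistOptimal qbar F₀ c κ Q F)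
    (hQ' : IsAllocation θL θH qbar Q') (hvol : Q' =ᵐ[volume] Q) (hF : Q' =ᵐ[F.meas] Q) :
    MonopolistOptimal qbar F₀ c κ Q' F := by
  have hprofit : F.integ (profit θL κ Q' 0) = F.integ (profit θL κ Q 0) :=
    integral_congr_ae <| hF.mono fun θ hθ => by simp only [profit, hθ, Vfun_congr_ae hvol]
  exact ⟨hQ', (isIC_congr_ae hvol).2 hopt.2.1,
    fun Q'' u F' hQ'' hu hIC => hprofit ▸ hopt.2.2 Q'' u F' hQ'' hu hIC⟩

lemma MonopolistOptimal.ae_eq_of_surplus_lt (hopt : MonopolistOptimal qbar F₀ c κ Q F)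
    (hκ : MonotoneOn κ (Icc 0 qbar)) (hQ' : IsAllocation θL θH qbar Q')
    (hvol : Q' =ᵐ[volume] Q)
    (hsurplus : ∀ θ ∈ Icc θL θH, Q' θ ≠ Q θ → θ * Q θ - κ (Q θ) < θ * Q' θ - κ (Q' θ)) :
    Q' =ᵐ[F.meas] Q := by
  set gain : ℝ → ℝ := fun θ => profit θL κ Q' 0 θ - profit θL κ Q 0 θ
  have hgain_pos : ∀ θ ∈ Icc θL θH, Q' θ ≠ Q θ → 0 < gain θ := fun θ hθ hne => by
    simp only [gain, profit, Vfun_congr_ae hvol]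
    linarith [hsurplus θ hθ hne]
  have hgain_nonneg : 0 ≤ᵐ[F.meas] gain := F.ae_mem_Icc.mono fun θ hθ => by
    by_cases hne : Q' θ = Q θ
    · simp [gain, profit, hne, Vfun_congr_ae hvol]
    · exact (hgain_pos θ hθ hne).le
  have hint : Integrable gain F.meas :=
    (hQ'.integrable_profit hκ F 0).sub (hopt.1.integrable_profit hκ F 0)
  have hgain_le : ∫ θ, gain θ ∂F.meas ≤ 0 := by
    rw [integral_sub (hQ'.integrable_profit hκ F 0) (hopt.1.integrable_profit hκ F 0)]
    exact sub_nonpos.2 (hopt.2.2 Q' 0 F hQ' le_rfl ((isIC_congr_ae hvol).2 hopt.2.1))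
  have hgain_zero : gain =ᵐ[F.meas] 0 :=
    (integral_eq_zero_iff_of_nonneg_ae hgain_nonneg hint).1
      (le_antisymm hgain_le (integral_nonneg_of_ae hgain_nonneg))
  filter_upwards [hgain_zero, F.ae_mem_Icc] with θ hθ hmem
  by_contra hne
  exact (hgain_pos θ hmem hne).ne' hθ

end Mechanism

section Jumps

noncomputable def rightLimOn (θH : ℝ) (Q : ℝ → ℝ) (θ : ℝ) : ℝ := sInf (Q '' Ioc θ θH)

noncomputable def leftLimOn (θL : ℝ) (Q : ℝ → ℝ) (θ : ℝ) : ℝ := sSup (Q '' Ico θL θ)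

noncomputable def jumpAdjusted (θL θH : ℝ) (κ' Q : ℝ → ℝ) (θ : ℝ) : ℝ :=
  if θL ≤ θ ∧ θ < θH ∧ κ' (rightLimOn θH Q θ) < θ then rightLimOn θH Q θ
  else if θL < θ ∧ θ ≤ θH ∧ θ < κ' (leftLimOn θL Q θ) then leftLimOn θL Q θ
  else Q θ

variable {θL θH qbar θ t : ℝ} {κ κ' Q : ℝ → ℝ}

namespace IsAllocation

variable (hQ : IsAllocation θL θH qbar Q)
include hQ

lemma rightLimOn_le (hθ : θL ≤ θ) (ht : t ∈ Ioc θ θH) : rightLimOn θH Q θ ≤ Q t :=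
  csInf_le ⟨0, by rintro _ ⟨s, hs, rfl⟩; exact (hQ.2 s ⟨hθ.trans hs.1.le, hs.2⟩).1⟩ ⟨t, ht, rfl⟩

lemma le_rightLimOn (hθ : θ ∈ Ico θL θH) : Q θ ≤ rightLimOn θH Q θ :=
  le_csInf ⟨Q θH, θH, ⟨hθ.2, le_rfl⟩, rfl⟩ <| by
    rintro _ ⟨s, hs, rfl⟩
    exact hQ.1 (Ico_subset_Icc_self hθ) ⟨hθ.1.trans hs.1.le, hs.2⟩ hs.1.le

lemma le_leftLimOn (ht : t ∈ Ico θL θ) (hθ : θ ≤ θH) : Q t ≤ leftLimOn θL Q θ :=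
  le_csSup ⟨qbar, by rintro _ ⟨s, hs, rfl⟩; exact (hQ.2 s ⟨hs.1, hs.2.le.trans hθ⟩).2⟩ ⟨t, ht, rfl⟩

lemma leftLimOn_le (hθ : θ ∈ Ioc θL θH) : leftLimOn θL Q θ ≤ Q θ :=
  csSup_le ⟨Q θL, θL, ⟨le_rfl, hθ.1⟩, rfl⟩ <| by
    rintro _ ⟨s, hs, rfl⟩
    exact hQ.1 ⟨hs.1, hs.2.le.trans hθ.2⟩ (Ioc_subset_Icc_self hθ) hs.2.le

lemma rightLimOn_mem (hθ : θ ∈ Ico θL θH) : rightLimOn θH Q θ ∈ Icc 0 qbar :=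
  ⟨(hQ.2 θ (Ico_subset_Icc_self hθ)).1.trans (hQ.le_rightLimOn hθ),
    (hQ.rightLimOn_le hθ.1 ⟨hθ.2, le_rfl⟩).trans (hQ.2 θH ⟨hθ.1.trans hθ.2.le, le_rfl⟩).2⟩

lemma leftLimOn_mem (hθ : θ ∈ Ioc θL θH) : leftLimOn θL Q θ ∈ Icc 0 qbar :=
  ⟨(hQ.2 θL ⟨le_rfl, hθ.1.le.trans hθ.2⟩).1.trans (hQ.le_leftLimOn ⟨le_rfl, hθ.1⟩ hθ.2),
    (hQ.leftLimOn_le hθ).trans (hQ.2 θ (Ioc_subset_Icc_self hθ)).2⟩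

lemma rightLimOn_le_leftLimOn {θ' : ℝ} (hθ : θL ≤ θ) (hθθ' : θ < θ') (hθ' : θ' ≤ θH) :
    rightLimOn θH Q θ ≤ leftLimOn θL Q θ' := by
  obtain ⟨s, hθs, hsθ'⟩ := exists_between hθθ'
  exact (hQ.rightLimOn_le hθ ⟨hθs, hsθ'.le.trans hθ'⟩).trans
    (hQ.le_leftLimOn ⟨hθ.trans hθs.le, hsθ'⟩ hθ')

lemma countable_setOf_lt_rightLimOn :
    {θ | θ ∈ Ico θL θH ∧ Q θ < rightLimOn θH Q θ}.Countable :=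
  Set.countable_of_forall_lt_of_le (fun _ hx => hx.2)
    fun _ hx _ hy hxy => hQ.rightLimOn_le hx.1.1 ⟨hxy, hy.1.2.le⟩

lemma countable_setOf_leftLimOn_lt :
    {θ | θ ∈ Ioc θL θH ∧ leftLimOn θL Q θ < Q θ}.Countable :=
  Set.countable_of_forall_lt_of_le (fun _ hx => hx.2)
    fun _ hx _ hy hxy => hQ.le_leftLimOn ⟨hx.1.1.le, hxy⟩ hy.1.2

end IsAllocation

lemma jumpAdjusted_cases (θL θH : ℝ) (κ' Q : ℝ → ℝ) (θ : ℝ) :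
    (θ ∈ Ico θL θH ∧ κ' (rightLimOn θH Q θ) < θ ∧
        jumpAdjusted θL θH κ' Q θ = rightLimOn θH Q θ) ∨
      (θ ∈ Ioc θL θH ∧ θ < κ' (leftLimOn θL Q θ) ∧
        jumpAdjusted θL θH κ' Q θ = leftLimOn θL Q θ) ∨
      jumpAdjusted θL θH κ' Q θ = Q θ := by
  unfold jumpAdjusted
  split_ifs with hR hL
  · exact Or.inl ⟨⟨hR.1, hR.2.1⟩, hR.2.2, rfl⟩
  · exact Or.inr (Or.inl ⟨⟨hL.1, hL.2.1⟩, hL.2.2, rfl⟩)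
  · exact Or.inr (Or.inr rfl)

lemma jumpAdjusted_eq_rightLimOn (hθ : θ ∈ Ico θL θH) (hlt : κ' (rightLimOn θH Q θ) < θ) :
    jumpAdjusted θL θH κ' Q θ = rightLimOn θH Q θ :=
  if_pos ⟨hθ.1, hθ.2, hlt⟩

namespace IsAllocation

variable (hQ : IsAllocation θL θH qbar Q)
include hQ

lemma jumpAdjusted_le_rightLimOn (hθ : θ ∈ Ico θL θH) :
    jumpAdjusted θL θH κ' Q θ ≤ rightLimOn θH Q θ := by
  rcases jumpAdjusted_cases θL θH κ' Q θ with ⟨-, -, h⟩ | ⟨hθ', -, h⟩ | h <;> rw [h]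
  · exact (hQ.leftLimOn_le hθ').trans (hQ.le_rightLimOn hθ)
  · exact hQ.le_rightLimOn hθ

lemma leftLimOn_le_jumpAdjusted (hθ : θ ∈ Ioc θL θH) :
    leftLimOn θL Q θ ≤ jumpAdjusted θL θH κ' Q θ := by
  rcases jumpAdjusted_cases θL θH κ' Q θ with ⟨hθ', -, h⟩ | ⟨-, -, h⟩ | h <;> rw [h]
  · exact (hQ.leftLimOn_le hθ).trans (hQ.le_rightLimOn hθ')
  · exact hQ.leftLimOn_le hθ

lemma jumpAdjusted_mem (hθ : θ ∈ Icc θL θH) : jumpAdjusted θL θH κ' Q θ ∈ Icc 0 qbar := by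
  rcases jumpAdjusted_cases θL θH κ' Q θ with ⟨hθ', -, h⟩ | ⟨hθ', -, h⟩ | h <;> rw [h]
  exacts [hQ.rightLimOn_mem hθ', hQ.leftLimOn_mem hθ', hQ.2 θ hθ]

lemma isAllocation_jumpAdjusted : IsAllocation θL θH qbar (jumpAdjusted θL θH κ' Q) := by
  refine ⟨fun a ha b hb hab => ?_, fun θ hθ => hQ.jumpAdjusted_mem hθ⟩
  rcases hab.eq_or_lt with rfl | h
  · rfl
  calc jumpAdjusted θL θH κ' Q a ≤ rightLimOn θH Q a :=
        hQ.jumpAdjusted_le_rightLimOn ⟨ha.1, h.trans_le hb.2⟩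
    _ ≤ leftLimOn θL Q b := hQ.rightLimOn_le_leftLimOn ha.1 h hb.2
    _ ≤ jumpAdjusted θL θH κ' Q b := hQ.leftLimOn_le_jumpAdjusted ⟨ha.1.trans_lt h, hb.2⟩

lemma jumpAdjusted_ae_eq : jumpAdjusted θL θH κ' Q =ᵐ[volume] Q := by
  refine ((hQ.countable_setOf_lt_rightLimOn.union hQ.countable_setOf_leftLimOn_lt).ae_notMem
    volume).mono fun θ hθ => ?_
  by_contra hne
  refine hθ ?_
  rcases jumpAdjusted_cases θL θH κ' Q θ with ⟨hθ', -, h⟩ | ⟨hθ', -, h⟩ | h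
  · exact Or.inl ⟨hθ', (hQ.le_rightLimOn hθ').lt_of_ne (h ▸ Ne.symm hne)⟩
  · exact Or.inr ⟨hθ', (hQ.leftLimOn_le hθ').lt_of_ne (h ▸ hne)⟩
  · exact absurd h hne

lemma surplus_lt_jumpAdjusted (hκ : ConvexOn ℝ (Icc 0 qbar) κ)
    (hκ' : ∀ q ∈ Icc 0 qbar, HasDerivWithinAt κ (κ' q) (Icc 0 qbar) q) (hθ : θ ∈ Icc θL θH)
    (hne : jumpAdjusted θL θH κ' Q θ ≠ Q θ) :
    θ * Q θ - κ (Q θ) < θ * jumpAdjusted θL θH κ' Q θ - κ (jumpAdjusted θL θH κ' Q θ) := by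
  rcases jumpAdjusted_cases θL θH κ' Q θ with ⟨hθ', hlt, h⟩ | ⟨hθ', hlt, h⟩ | h
  · rw [h] at hne ⊢
    exact hκ.surplus_lt_of_deriv_lt (hQ.2 θ hθ) (hQ.rightLimOn_mem hθ')
      ((hQ.le_rightLimOn hθ').lt_of_ne hne.symm) (hκ' _ (hQ.rightLimOn_mem hθ')) hlt
  · rw [h] at hne ⊢
    exact hκ.surplus_lt_of_lt_deriv (hQ.2 θ hθ) (hQ.leftLimOn_mem hθ')
      ((hQ.leftLimOn_le hθ').lt_of_ne hne) (hκ' _ (hQ.leftLimOn_mem hθ')) hlt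
  · exact absurd h hne

lemma rightLimOn_jumpAdjusted (hθ : θ ∈ Ico θL θH) :
    rightLimOn θH (jumpAdjusted θL θH κ' Q) θ = rightLimOn θH Q θ := by
  have hQ' := hQ.isAllocation_jumpAdjusted (κ' := κ')
  refine le_antisymm (le_csInf ⟨Q θH, θH, ⟨hθ.2, le_rfl⟩, rfl⟩ ?_)
    (le_csInf ⟨_, θH, ⟨hθ.2, le_rfl⟩, rfl⟩ ?_)
  · rintro _ ⟨t, ht, rfl⟩
    obtain ⟨s, hθs, hst⟩ := exists_between ht.1
    calc rightLimOn θH (jumpAdjusted θL θH κ' Q) θ ≤ jumpAdjusted θL θH κ' Q s :=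
          hQ'.rightLimOn_le hθ.1 ⟨hθs, hst.le.trans ht.2⟩
      _ ≤ rightLimOn θH Q s := hQ.jumpAdjusted_le_rightLimOn ⟨hθ.1.trans hθs.le, hst.trans_le ht.2⟩
      _ ≤ Q t := hQ.rightLimOn_le (hθ.1.trans hθs.le) ⟨hst, ht.2⟩
  · rintro _ ⟨t, ht, rfl⟩
    exact (hQ.rightLimOn_le_leftLimOn hθ.1 ht.1 ht.2).trans
      (hQ.leftLimOn_le_jumpAdjusted ⟨hθ.1.trans_lt ht.1, ht.2⟩)

lemma leftLimOn_jumpAdjusted (hθ : θ ∈ Ioc θL θH) :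
    leftLimOn θL (jumpAdjusted θL θH κ' Q) θ = leftLimOn θL Q θ := by
  have hQ' := hQ.isAllocation_jumpAdjusted (κ' := κ')
  refine le_antisymm (csSup_le ⟨_, θL, ⟨le_rfl, hθ.1⟩, rfl⟩ ?_)
    (csSup_le ⟨Q θL, θL, ⟨le_rfl, hθ.1⟩, rfl⟩ ?_)
  · rintro _ ⟨t, ht, rfl⟩
    exact (hQ.jumpAdjusted_le_rightLimOn ⟨ht.1, ht.2.trans_le hθ.2⟩).trans
      (hQ.rightLimOn_le_leftLimOn ht.1 ht.2 hθ.2)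
  · rintro _ ⟨t, ht, rfl⟩
    obtain ⟨s, hts, hsθ⟩ := exists_between ht.2
    calc Q t ≤ leftLimOn θL Q s := hQ.le_leftLimOn ⟨ht.1, hts⟩ (hsθ.le.trans hθ.2)
      _ ≤ jumpAdjusted θL θH κ' Q s :=
          hQ.leftLimOn_le_jumpAdjusted ⟨ht.1.trans_lt hts, hsθ.le.trans hθ.2⟩
      _ ≤ leftLimOn θL (jumpAdjusted θL θH κ' Q) θ := hQ'.le_leftLimOn ⟨ht.1.trans hts.le, hsθ⟩ hθ.2

lemma jumpAdjusted_eq_leftLimOn (hκ' : MonotoneOn κ' (Icc 0 qbar)) (hθ : θ ∈ Ioc θL θH)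
    (hlt : θ < κ' (leftLimOn θL Q θ)) : jumpAdjusted θL θH κ' Q θ = leftLimOn θL Q θ := by
  have hR : ¬ (θL ≤ θ ∧ θ < θH ∧ κ' (rightLimOn θH Q θ) < θ) := fun hR =>
    have hθ' : θ ∈ Ico θL θH := ⟨hR.1, hR.2.1⟩
    (hR.2.2.trans hlt).not_ge <| hκ' (hQ.leftLimOn_mem hθ) (hQ.rightLimOn_mem hθ')
      ((hQ.leftLimOn_le hθ).trans (hQ.le_rightLimOn hθ'))
  rw [_root_.jumpAdjusted, if_neg hR, if_pos ⟨hθ.1, hθ.2, hlt⟩]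

end IsAllocation

end Jumps

theorem statement16_general {θL θH : ℝ}
    (F₀ : CDF θL θH)
    (c : ℝ → ℝ)
    (qbar : ℝ)
    (κ κ' : ℝ → ℝ) (hκ : KappaAssumptions θL θH qbar κ κ')
    (Q : ℝ → ℝ) (F : CDF θL θH)
    (hopt : MonopolistOptimal qbar F₀ c κ Q F) :
    ∃ Qt : ℝ → ℝ, IsAllocation θL θH qbar Qt ∧
      (∀ᵐ θ ∂F.meas, Qt θ = Q θ) ∧
      MonopolistOptimal qbar F₀ c κ Qt F ∧
      (∀ θ ∈ Set.Ico θL θH,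
        κ' (sInf (Qt '' Set.Ioc θ θH)) < θ → sInf (Qt '' Set.Ioc θ θH) = Qt θ) ∧
      (∀ θ ∈ Set.Ioc θL θH,
        θ < κ' (sSup (Qt '' Set.Ico θL θ)) → sSup (Qt '' Set.Ico θL θ) = Qt θ) := by
  have hQ := hopt.1
  have hconv := hκ.strictConvex.convexOn
  have hQt := hQ.isAllocation_jumpAdjusted (κ' := κ')
  have hvol := hQ.jumpAdjusted_ae_eq (κ' := κ')
  have hF : jumpAdjusted θL θH κ' Q =ᵐ[F.meas] Q :=
    hopt.ae_eq_of_surplus_lt hκ.strictMono.monotoneOn hQt hvol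
      fun θ hθ hne => hQ.surplus_lt_jumpAdjusted hconv hκ.hasDeriv hθ hne
  refine ⟨jumpAdjusted θL θH κ' Q, hQt, hF, hopt.congr_ae hQt hvol hF,
    fun θ hθ hlt => ?_, fun θ hθ hlt => ?_⟩
  · change κ' (rightLimOn θH _ θ) < θ at hlt
    change rightLimOn θH _ θ = _
    rw [hQ.rightLimOn_jumpAdjusted hθ] at hlt ⊢
    exact (jumpAdjusted_eq_rightLimOn hθ hlt).symm
  · change θ < κ' (leftLimOn θL _ θ) at hlt
    change leftLimOn θL _ θ = _
    rw [hQ.leftLimOn_jumpAdjusted hθ] at hlt ⊢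
    exact (hQ.jumpAdjusted_eq_leftLimOn
      (hconv.monotoneOn_of_hasDerivWithinAt hκ.hasDeriv) hθ hlt).symm

theorem statement16 {θL θH : ℝ} (hθL : 0 ≤ θL) (hθ : θL < θH)
    (F₀ : CDF θL θH) (hF₀ : IsPrior F₀)
    (c c' c'' : ℝ → ℝ) (hc : CostAssumptions θL θH F₀.mean c c' c'')
    (qbar : ℝ) (hqbar : 0 < qbar)
    (κ κ' : ℝ → ℝ) (hκ : KappaAssumptions θL θH qbar κ κ')
    (Q : ℝ → ℝ) (F : CDF θL θH)
    (hopt : MonopolistOptimal qbar F₀ c κ Q F) :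
    ∃ Qt : ℝ → ℝ, IsAllocation θL θH qbar Qt ∧
      (∀ᵐ θ ∂F.meas, Qt θ = Q θ) ∧
      MonopolistOptimal qbar F₀ c κ Qt F ∧
      (∀ θ ∈ Set.Ico θL θH,
        κ' (sInf (Qt '' Set.Ioc θ θH)) < θ → sInf (Qt '' Set.Ioc θ θH) = Qt θ) ∧
      (∀ θ ∈ Set.Ioc θL θH,
        θ < κ' (sSup (Qt '' Set.Ico θL θ)) → sSup (Qt '' Set.Ico θL θ) = Qt θ) :=
  statement16_general F₀ c qbar κ κ' hκ Q F hopt
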